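/- Let F : ℝ → Set ℝ be upper semicontinuous with nonempty compact convex values, and let f : ℝ → ℝ be a selection of F (f(t) ∈ F(t) for all t). Define the lower approximation f̲(t) = lim_{δ→0⁺} essinf_{|h|<δ} f(t+h) and upper approximation f̄(t) = lim_{δ→0⁺} esssup_{|h|<δ} f(t+h). Then for all t ∈ ℝ, min F(t) ≤ f̲(t) and f̄(t) ≤ max F(t). -/
import Mathlib


open MeasureTheory Set Filter

/-- Lower essential approximation `f̲(t) = lim_{δ→0⁺} essinf_{|h|<δ} f(t+h)`;
since the essential infimum increases as `δ` decreases, the limit equals the supremum. -/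
noncomputable def lowerApprox (f : ℝ → ℝ) (t : ℝ) : ℝ :=
  ⨆ δ > (0:ℝ), essInf f (volume.restrict (Set.Ioo (t - δ) (t + δ)))

/-- Upper essential approximation `f̄(t) = lim_{δ→0⁺} esssup_{|h|<δ} f(t+h)`. -/
noncomputable def upperApprox (f : ℝ → ℝ) (t : ℝ) : ℝ :=
  ⨅ δ > (0:ℝ), essSup f (volume.restrict (Set.Ioo (t - δ) (t + δ)))

namespace MinMaxApproxAux

variable {f : ℝ → ℝ} {t : ℝ}

lemma freq_le {δ δ' C : ℝ} (hδ' : 0 < δ') (hle : δ' ≤ δ)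
    (hC : ∀ x ∈ Set.Ioo (t - δ') (t + δ'), f x ≤ C) :
    ∃ᶠ x in ae (volume.restrict (Set.Ioo (t - δ) (t + δ))), f x ≤ C := by
  rw [frequently_ae_iff]
  intro h0
  have hsub2 : Set.Ioo (t - δ') (t + δ') ⊆ Set.Ioo (t - δ) (t + δ) :=
    Set.Ioo_subset_Ioo (by linarith) (by linarith)
  have hsub : Set.Ioo (t - δ') (t + δ') ⊆ {x | f x ≤ C} := fun x hx => hC x hx
  have : (volume.restrict (Set.Ioo (t - δ) (t + δ))) (Set.Ioo (t - δ') (t + δ'))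
      ≤ (volume.restrict (Set.Ioo (t - δ) (t + δ))) _ := measure_mono hsub
  rw [h0, Measure.restrict_apply' measurableSet_Ioo,
    Set.inter_eq_left.mpr hsub2] at this
  simp only [le_zero_iff] at this
  rw [Real.volume_Ioo] at this
  have : (0:ℝ) < (t + δ') - (t - δ') := by linarith
  simp_all [ENNReal.ofReal_eq_zero]
  linarith

lemma freq_ge {δ δ' C : ℝ} (hδ' : 0 < δ') (hle : δ' ≤ δ)
    (hC : ∀ x ∈ Set.Ioo (t - δ') (t + δ'), C ≤ f x) :
    ∃ᶠ x in ae (volume.restrict (Set.Ioo (t - δ) (t + δ))), C ≤ f x := by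
  rw [frequently_ae_iff]
  intro h0
  have hsub2 : Set.Ioo (t - δ') (t + δ') ⊆ Set.Ioo (t - δ) (t + δ) :=
    Set.Ioo_subset_Ioo (by linarith) (by linarith)
  have hsub : Set.Ioo (t - δ') (t + δ') ⊆ {x | C ≤ f x} := fun x hx => hC x hx
  have : (volume.restrict (Set.Ioo (t - δ) (t + δ))) (Set.Ioo (t - δ') (t + δ'))
      ≤ (volume.restrict (Set.Ioo (t - δ) (t + δ))) _ := measure_mono hsub
  rw [h0, Measure.restrict_apply' measurableSet_Ioo,
    Set.inter_eq_left.mpr hsub2] at this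
  simp only [le_zero_iff] at this
  rw [Real.volume_Ioo] at this
  have : (0:ℝ) < (t + δ') - (t - δ') := by linarith
  simp_all [ENNReal.ofReal_eq_zero]
  linarith

lemma essInf_eq_sSup (δ : ℝ) :
    essInf f (volume.restrict (Set.Ioo (t - δ) (t + δ)))
      = sSup {a | ∀ᶠ x in ae (volume.restrict (Set.Ioo (t - δ) (t + δ))), a ≤ f x} := by
  rw [essInf, Filter.liminf_eq]

lemma essSup_eq_sInf (δ : ℝ) :
    essSup f (volume.restrict (Set.Ioo (t - δ) (t + δ)))
      = sInf {a | ∀ᶠ x in ae (volume.restrict (Set.Ioo (t - δ) (t + δ))), f x ≤ a} := by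
  rw [essSup, Filter.limsup_eq]

lemma lower_aux (f : ℝ → ℝ) (t m M : ℝ)
    (h : ∀ ε > (0:ℝ), ∃ δ > (0:ℝ), ∀ x ∈ Set.Ioo (t - δ) (t + δ),
      f x ∈ Set.Ioo (m - ε) (M + ε)) :
    m ≤ lowerApprox f t := by
  set g : ℝ → ℝ := fun δ => essInf f (volume.restrict (Set.Ioo (t - δ) (t + δ))) with hg
  obtain ⟨δ1, hδ1, hb1⟩ := h 1 one_pos
  -- upper bound for the whole family
  have hbdd : BddAbove (Set.range fun δ => ⨆ _ : δ > (0:ℝ), g δ) := by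
    refine ⟨max (M + 1) 0, ?_⟩
    rintro _ ⟨δ, rfl⟩
    dsimp only
    by_cases hδ : 0 < δ
    · rw [ciSup_pos hδ]
      show essInf f (volume.restrict (Set.Ioo (t - δ) (t + δ))) ≤ _
      rw [essInf_eq_sSup]
      rcases Set.eq_empty_or_nonempty
          {a | ∀ᶠ x in ae (volume.restrict (Set.Ioo (t - δ) (t + δ))), a ≤ f x} with he | hne
      · rw [he, Real.sSup_empty]; exact le_max_right _ _
      · refine le_trans (csSup_le hne ?_) (le_max_left _ _)
        intro a ha
        have hfr := freq_le (f := f) (t := t) (δ := δ)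
          (lt_min hδ hδ1) (min_le_left _ _) (C := M + 1) ?_
        · obtain ⟨x, hx1, hx2⟩ := (hfr.and_eventually ha).exists
          linarith
        · intro x hx
          have : x ∈ Set.Ioo (t - δ1) (t + δ1) := by
            rcases hx with ⟨h1, h2⟩
            constructor <;> [skip; skip] <;>
              · have := min_le_right δ δ1; simp only [Set.mem_Ioo] at *; linarith
          exact le_of_lt (hb1 x this).2
    · haveI : IsEmpty (δ > (0:ℝ)) := ⟨fun hh => hδ hh⟩
      rw [Real.iSup_of_isEmpty]
      exact le_max_right _ _
  refine le_of_forall_pos_le_add ?_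
  intro ε hε
  obtain ⟨δ, hδ, hb⟩ := h ε hε
  have hmem : m - ε ∈ {a | ∀ᶠ x in ae (volume.restrict (Set.Ioo (t - δ) (t + δ))), a ≤ f x} := by
    filter_upwards [ae_restrict_mem measurableSet_Ioo] with x hx
    exact le_of_lt (hb x hx).1
  have hSbdd : BddAbove {a | ∀ᶠ x in ae (volume.restrict (Set.Ioo (t - δ) (t + δ))), a ≤ f x} := by
    refine ⟨M + ε, ?_⟩
    intro a ha
    have hfr := freq_le (f := f) (t := t) (δ := δ) hδ le_rfl (C := M + ε)
      (fun x hx => le_of_lt (hb x hx).2)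
    obtain ⟨x, hx1, hx2⟩ := (hfr.and_eventually ha).exists
    linarith
  have h1 : m - ε ≤ g δ := by
    show m - ε ≤ essInf f (volume.restrict (Set.Ioo (t - δ) (t + δ)))
    rw [essInf_eq_sSup]; exact le_csSup hSbdd hmem
  have h2 : g δ ≤ lowerApprox f t := by
    have := le_ciSup hbdd δ
    rw [ciSup_pos hδ] at this
    exact this
  linarith

lemma upper_aux (f : ℝ → ℝ) (t m M : ℝ)
    (h : ∀ ε > (0:ℝ), ∃ δ > (0:ℝ), ∀ x ∈ Set.Ioo (t - δ) (t + δ),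
      f x ∈ Set.Ioo (m - ε) (M + ε)) :
    upperApprox f t ≤ M := by
  set g : ℝ → ℝ := fun δ => essSup f (volume.restrict (Set.Ioo (t - δ) (t + δ))) with hg
  obtain ⟨δ1, hδ1, hb1⟩ := h 1 one_pos
  have hbdd : BddBelow (Set.range fun δ => ⨅ _ : δ > (0:ℝ), g δ) := by
    refine ⟨min (m - 1) 0, ?_⟩
    rintro _ ⟨δ, rfl⟩
    dsimp only
    by_cases hδ : 0 < δ
    · rw [ciInf_pos hδ]
      show _ ≤ essSup f (volume.restrict (Set.Ioo (t - δ) (t + δ)))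
      rw [essSup_eq_sInf]
      rcases Set.eq_empty_or_nonempty
          {a | ∀ᶠ x in ae (volume.restrict (Set.Ioo (t - δ) (t + δ))), f x ≤ a} with he | hne
      · rw [he, Real.sInf_empty]; exact min_le_right _ _
      · refine le_trans (min_le_left _ _) (le_csInf hne ?_)
        intro a ha
        have hfr := freq_ge (f := f) (t := t) (δ := δ)
          (lt_min hδ hδ1) (min_le_left _ _) (C := m - 1) ?_
        · obtain ⟨x, hx1, hx2⟩ := (hfr.and_eventually ha).exists
          linarith
        · intro x hx
          have : x ∈ Set.Ioo (t - δ1) (t + δ1) := by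
            rcases hx with ⟨h1, h2⟩
            constructor <;> [skip; skip] <;>
              · have := min_le_right δ δ1; simp only [Set.mem_Ioo] at *; linarith
          exact le_of_lt (hb1 x this).1
    · haveI : IsEmpty (δ > (0:ℝ)) := ⟨fun hh => hδ hh⟩
      rw [Real.iInf_of_isEmpty]
      exact min_le_right _ _
  refine le_of_forall_pos_le_add ?_
  intro ε hε
  obtain ⟨δ, hδ, hb⟩ := h ε hε
  have hmem : M + ε ∈ {a | ∀ᶠ x in ae (volume.restrict (Set.Ioo (t - δ) (t + δ))), f x ≤ a} := by
    filter_upwards [ae_restrict_mem measurableSet_Ioo] with x hx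
    exact le_of_lt (hb x hx).2
  have hSbdd : BddBelow {a | ∀ᶠ x in ae (volume.restrict (Set.Ioo (t - δ) (t + δ))), f x ≤ a} := by
    refine ⟨m - ε, ?_⟩
    intro a ha
    have hfr := freq_ge (f := f) (t := t) (δ := δ) hδ le_rfl (C := m - ε)
      (fun x hx => le_of_lt (hb x hx).1)
    obtain ⟨x, hx1, hx2⟩ := (hfr.and_eventually ha).exists
    linarith
  have h1 : g δ ≤ M + ε := by
    show essSup f (volume.restrict (Set.Ioo (t - δ) (t + δ))) ≤ M + ε
    rw [essSup_eq_sInf]; exact csInf_le hSbdd hmem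
  have h2 : upperApprox f t ≤ g δ := by
    have := ciInf_le hbdd δ
    rw [ciInf_pos hδ] at this
    exact this
  linarith

end MinMaxApproxAux

/-- For an u.s.c. map `F` with nonempty compact convex values and a selection
`f` of `F`, one has `min F(t) ≤ f̲(t)` and `f̄(t) ≤ max F(t)` for all `t`. -/
theorem minF_le_lowerApprox_and_upperApprox_le_maxF (F : ℝ → Set ℝ)
    (husc : ∀ A : Set ℝ, IsOpen A → IsOpen {x | F x ⊆ A})
    (hne : ∀ t, (F t).Nonempty) (hcp : ∀ t, IsCompact (F t)) (hcv : ∀ t, Convex ℝ (F t))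
    (f : ℝ → ℝ) (hsel : ∀ t, f t ∈ F t) :
    ∀ t : ℝ, sInf (F t) ≤ lowerApprox f t ∧ upperApprox f t ≤ sSup (F t) := by
  intro t
  set m := sInf (F t) with hm
  set M := sSup (F t) with hM
  have key : ∀ ε > (0:ℝ), ∃ δ > (0:ℝ), ∀ x ∈ Set.Ioo (t - δ) (t + δ),
      f x ∈ Set.Ioo (m - ε) (M + ε) := by
    intro ε hε
    have hsub : F t ⊆ Set.Ioo (m - ε) (M + ε) := by
      intro y hy
      have h1 : m ≤ y := csInf_le (hcp t).bddBelow hy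
      have h2 : y ≤ M := le_csSup (hcp t).bddAbove hy
      exact ⟨by linarith, by linarith⟩
    have hopen := husc (Set.Ioo (m - ε) (M + ε)) isOpen_Ioo
    have ht : t ∈ {x | F x ⊆ Set.Ioo (m - ε) (M + ε)} := hsub
    obtain ⟨δ, hδ, hball⟩ := Metric.isOpen_iff.1 hopen t ht
    refine ⟨δ, hδ, ?_⟩
    intro x hx
    have hxball : x ∈ Metric.ball t δ := by rw [Real.ball_eq_Ioo]; exact hx
    exact hball hxball (hsel x)
  exact ⟨MinMaxApproxAux.lower_aux f t m M key, MinMaxApproxAux.upper_aux f t m M key⟩
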